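/- arXiv:2008.08777 — 2 statements merged into one kernel-verified Lean document; each statement's English description precedes it below -/
import Mathlib

section
/- Let n, k be integers with n ≥ 3 and 1 ≤ k, and let u be a positive twice differentiable function on an interval I ⊂ ℝ such that 1 − (2/(n−2))² (u′(t)/u(t))² > 0 for all t ∈ I and u satisfies the radial cylindrical σ_k equation on I. Define K(t) := −1 − (2/(n−2)) u″(t)/u(t) + (2n/(n−2)²) (u′(t)/u(t))² and h(t) := [ 1 − u(t)^{−4k/(n−2)} (1 − (2/(n−2))²(u′(t)/u(t))²)^{k} ] u(t)^{2n/(n−2)}. Then for all t ∈ I, ( 1/2 − (2/(n−2)²)(u′(t)/u(t))² )^{k−1} · K(t) · u(t)^{−4k/(n−2)} · u(t)^{2n/(n−2)} = (n/(2k)) (1/2)^{k−1} h(t). Consequently, the k-Dilational Pohozaev integrand C(n−1,k−1)·((n−k)/n)·(1/2 − (2/(n−2)²)(u′/u)²)^{k−1} u^{−4k/(n−2)} K(t) · u^{2n/(n−2)} equals C(n−1,k−1)·((n−k)/n)·(n/(2k))·(1/2)^{k−1}·h(t). -/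
open Set Filter

/-- The radial cylindrical `σ_k` equation
`(1 − (2/(n−2))²(u′/u)²)^{k−1} [ (k/n)(2/(n−2))(−u″/u + (u′/u)²)
  + (1/2 − k/n)(1 − (2/(n−2))²(u′/u)²) ] u^{−4k/(n−2)} = 1/2`,
satisfied by the conformal factor of a rotationally symmetric metric
`g = u(t)^{4/(n-2)}(dt² + dθ²)` of constant `σ_k` curvature `binom(n,k)(1/2)^k`
on the cylinder; `u'` and `u''` denote the first and second derivatives of `u`. -/
def RadialSigmaKEq (n k : ℕ) (u u' u'' : ℝ → ℝ) (t : ℝ) : Prop :=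
  (1 - (2 / ((n : ℝ) - 2)) ^ 2 * (u' t / u t) ^ 2) ^ (k - 1) *
      (((k : ℝ) / (n : ℝ)) * (2 / ((n : ℝ) - 2)) * (-(u'' t / u t) + (u' t / u t) ^ 2)
        + (1 / 2 - (k : ℝ) / (n : ℝ)) * (1 - (2 / ((n : ℝ) - 2)) ^ 2 * (u' t / u t) ^ 2)) *
      u t ^ (-(4 * (k : ℝ)) / ((n : ℝ) - 2)) = 1 / 2

lemma pohozaev_core (c κ : ℝ) (m : ℕ) (v w P Q : ℝ)
    (hc : c ≠ 0) (hc2 : c - 2 ≠ 0) (hκ : κ ≠ 0)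
    (heq : (1 - (2 / (c - 2)) ^ 2 * v ^ 2) ^ m *
        ((κ / c) * (2 / (c - 2)) * (-w + v ^ 2)
          + (1 / 2 - κ / c) * (1 - (2 / (c - 2)) ^ 2 * v ^ 2)) * P = 1 / 2) :
    (1 / 2 - (2 / (c - 2) ^ 2) * v ^ 2) ^ m *
        (-1 - (2 / (c - 2)) * w + (2 * c / (c - 2) ^ 2) * v ^ 2) * P * Q
      = (c / (2 * κ)) * (1 / 2) ^ m *
        ((1 - P * (1 - (2 / (c - 2)) ^ 2 * v ^ 2) ^ (m + 1)) * Q) := by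
  have hW : (1 / 2 - (2 / (c - 2) ^ 2) * v ^ 2)
      = (1 / 2) * (1 - (2 / (c - 2)) ^ 2 * v ^ 2) := by
    field_simp
  have hK : (-1 - (2 / (c - 2)) * w + (2 * c / (c - 2) ^ 2) * v ^ 2)
      = (c / κ) * ((κ / c) * (2 / (c - 2)) * (-w + v ^ 2)
          + (1 / 2 - κ / c) * (1 - (2 / (c - 2)) ^ 2 * v ^ 2))
        - (c / (2 * κ)) * (1 - (2 / (c - 2)) ^ 2 * v ^ 2) := by
    field_simp
    ring
  rw [hW, mul_pow, hK]
  linear_combination ((c / κ) * (1 / 2 : ℝ) ^ m * Q) * heq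

/-- **Pointwise core of the `k`-Dilational Pohozaev invariant computation.**  If `u > 0`
satisfies the radial cylindrical `σ_k` equation on an interval `I` with
`1 − (2/(n−2))²(u′/u)² > 0`, then with
`K(t) = −1 − (2/(n−2)) u″/u + (2n/(n−2)²)(u′/u)²` and
`h(t) = [1 − u^{−4k/(n−2)}(1 − (2/(n−2))²(u′/u)²)^k] u^{2n/(n−2)}` one has
`(1/2 − (2/(n−2)²)(u′/u)²)^{k−1} K(t) u^{−4k/(n−2)} u^{2n/(n−2)} = (n/(2k))(1/2)^{k−1} h(t)`,
and consequently the `k`-Dilational Pohozaev integrand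
`C(n−1,k−1)((n−k)/n)(1/2 − (2/(n−2)²)(u′/u)²)^{k−1} u^{−4k/(n−2)} K(t) u^{2n/(n−2)}`
equals `C(n−1,k−1)((n−k)/n)(n/(2k))(1/2)^{k−1} h(t)`. -/
theorem pohozaev_integrand_identity
    (n k : ℕ) (hn : 3 ≤ n) (hk : 1 ≤ k)
    (I : Set ℝ) (hI : I.OrdConnected)
    (u u' u'' : ℝ → ℝ)
    (hu_pos : ∀ t ∈ I, 0 < u t)
    (hu' : ∀ t ∈ I, HasDerivWithinAt u (u' t) I t)
    (hu'' : ∀ t ∈ I, HasDerivWithinAt u' (u'' t) I t)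
    (hcone : ∀ t ∈ I, 0 < 1 - (2 / ((n : ℝ) - 2)) ^ 2 * (u' t / u t) ^ 2)
    (heq : ∀ t ∈ I, RadialSigmaKEq n k u u' u'' t) :
    ∀ t ∈ I,
      (1 / 2 - (2 / ((n : ℝ) - 2) ^ 2) * (u' t / u t) ^ 2) ^ (k - 1) *
            (-1 - (2 / ((n : ℝ) - 2)) * (u'' t / u t)
              + (2 * (n : ℝ) / ((n : ℝ) - 2) ^ 2) * (u' t / u t) ^ 2) *
            u t ^ (-(4 * (k : ℝ)) / ((n : ℝ) - 2)) * u t ^ ((2 * (n : ℝ)) / ((n : ℝ) - 2))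
          = ((n : ℝ) / (2 * (k : ℝ))) * (1 / 2) ^ (k - 1) *
            ((1 - u t ^ (-(4 * (k : ℝ)) / ((n : ℝ) - 2)) *
                (1 - (2 / ((n : ℝ) - 2)) ^ 2 * (u' t / u t) ^ 2) ^ k) *
              u t ^ ((2 * (n : ℝ)) / ((n : ℝ) - 2))) ∧
      ((n - 1).choose (k - 1) : ℝ) * (((n : ℝ) - (k : ℝ)) / (n : ℝ)) *
            ((1 / 2 - (2 / ((n : ℝ) - 2) ^ 2) * (u' t / u t) ^ 2) ^ (k - 1) *
              u t ^ (-(4 * (k : ℝ)) / ((n : ℝ) - 2)) *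
              (-1 - (2 / ((n : ℝ) - 2)) * (u'' t / u t)
                + (2 * (n : ℝ) / ((n : ℝ) - 2) ^ 2) * (u' t / u t) ^ 2) *
              u t ^ ((2 * (n : ℝ)) / ((n : ℝ) - 2)))
          = ((n - 1).choose (k - 1) : ℝ) * (((n : ℝ) - (k : ℝ)) / (n : ℝ)) *
            ((n : ℝ) / (2 * (k : ℝ))) * (1 / 2) ^ (k - 1) *
            ((1 - u t ^ (-(4 * (k : ℝ)) / ((n : ℝ) - 2)) *
                (1 - (2 / ((n : ℝ) - 2)) ^ 2 * (u' t / u t) ^ 2) ^ k) *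
              u t ^ ((2 * (n : ℝ)) / ((n : ℝ) - 2))) := by
  obtain ⟨m, rfl⟩ : ∃ m, k = m + 1 := ⟨k - 1, (Nat.succ_pred_eq_of_pos hk).symm⟩
  intro t ht
  have hc : ((n : ℝ)) ≠ 0 := by positivity
  have hc2 : ((n : ℝ)) - 2 ≠ 0 := by
    have : (3 : ℝ) ≤ (n : ℝ) := by exact_mod_cast hn
    linarith
  have hκ : ((m + 1 : ℕ) : ℝ) ≠ 0 := by positivity
  have he := heq t ht
  unfold RadialSigmaKEq at he
  simp only [Nat.add_sub_cancel] at he ⊢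
  have key := pohozaev_core ((n : ℝ)) ((m + 1 : ℕ) : ℝ) m (u' t / u t) (u'' t / u t)
    (u t ^ (-(4 * ((m + 1 : ℕ) : ℝ)) / ((n : ℝ) - 2)))
    (u t ^ ((2 * (n : ℝ)) / ((n : ℝ) - 2))) hc hc2 hκ he
  refine ⟨key, ?_⟩
  linear_combination (((n - 1).choose m : ℝ) * (((n : ℝ) - ((m + 1 : ℕ) : ℝ)) / (n : ℝ))) * key
end

section
/- Let n, k be integers with n ≥ 3 and 1 ≤ k, and let u be a positive twice continuously differentiable function on an interval I ⊂ ℝ such that 1 − (2/(n−2))² (u′(t)/u(t))² > 0 for all t ∈ I and u satisfies the radial cylindrical σ_k equation on I. Then the function h(t) := [ 1 − u(t)^{−4k/(n−2)} (1 − (2/(n−2))²(u′(t)/u(t))²)^{k} ] u(t)^{2n/(n−2)} is constant on I; that is, h is differentiable on I with h′(t) = 0 for all t ∈ I. -/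
open Set Filter

/-!
With `a = 2/(n−2)`, `v = u′/u` and `w = 1 − a²v²`, the exponents are `−4k/(n−2) = −2ka` and
`2n/(n−2) = na`, and differentiating `h = (1 − u^{−2ka} w^k) u^{na}` (using `w′ = −2a²v v′`,
`v′ = u″/u − v²`) gives `h′ = a v u^{na} (n − 2n E)`, where `E` is the left-hand side of the
`σ_k` equation. The equation `E = 1/2` is therefore exactly `h′ = 0`, and the mean value
theorem on the interval makes `h` constant.
-/

theorem Convex.eq_of_hasDerivWithinAt_eq_zero {E : Type*} [NormedAddCommGroup E]
    [NormedSpace ℝ E] {f : ℝ → E} {s : Set ℝ} (hs : Convex ℝ s)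
    (hf : ∀ t ∈ s, HasDerivWithinAt f 0 s t) : ∀ x ∈ s, ∀ y ∈ s, f x = f y := by
  intro x hx y hy
  have h := hs.norm_image_sub_le_of_norm_hasDerivWithin_le hf (C := 0) (by simp) hy hx
  rw [zero_mul, norm_le_zero_iff, sub_eq_zero] at h
  exact h

namespace RadialSigmaK

noncomputable def coneFactor (n : ℕ) (u u' : ℝ → ℝ) (t : ℝ) : ℝ :=
  1 - (2 / ((n : ℝ) - 2)) ^ 2 * (u' t / u t) ^ 2

noncomputable def pohozaevQuantity (n k : ℕ) (u u' : ℝ → ℝ) (t : ℝ) : ℝ :=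
  (1 - u t ^ (-(4 * (k : ℝ)) / ((n : ℝ) - 2)) * coneFactor n u u' t ^ k) *
    u t ^ ((2 * (n : ℝ)) / ((n : ℝ) - 2))

variable {n k : ℕ} {u u' u'' : ℝ → ℝ} {s : Set ℝ} {t : ℝ}

theorem _root_.RadialSigmaKEq.mul_two_n (hn : (n : ℝ) ≠ 0)
    (h : RadialSigmaKEq n k u u' u'' t) :
    coneFactor n u u' t ^ (k - 1) *
        (2 * k * (2 / ((n : ℝ) - 2)) * ((u' t / u t) ^ 2 - u'' t / u t)
          + (n - 2 * k) * coneFactor n u u' t) *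
        u t ^ (-(4 * (k : ℝ)) / ((n : ℝ) - 2)) = n := by
  unfold RadialSigmaKEq at h
  unfold coneFactor
  calc _ = 2 * n * ((1 - (2 / ((n : ℝ) - 2)) ^ 2 * (u' t / u t) ^ 2) ^ (k - 1) *
      (((k : ℝ) / (n : ℝ)) * (2 / ((n : ℝ) - 2)) * (-(u'' t / u t) + (u' t / u t) ^ 2)
        + (1 / 2 - (k : ℝ) / (n : ℝ)) * (1 - (2 / ((n : ℝ) - 2)) ^ 2 * (u' t / u t) ^ 2)) *
      u t ^ (-(4 * (k : ℝ)) / ((n : ℝ) - 2))) := by field_simp; ring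
    _ = n := by rw [h]; ring

theorem hasDerivWithinAt_coneFactor (hu : u t ≠ 0) (hu' : HasDerivWithinAt u (u' t) s t)
    (hu'' : HasDerivWithinAt u' (u'' t) s t) :
    HasDerivWithinAt (coneFactor n u u')
      (-(2 * (2 / ((n : ℝ) - 2)) ^ 2 * (u' t / u t) * (u'' t / u t - (u' t / u t) ^ 2))) s t := by
  have hv : HasDerivWithinAt (fun x => u' x / u x) (u'' t / u t - (u' t / u t) ^ 2) s t :=
    (hu''.div hu' hu).congr_deriv (by field_simp)
  exact (((hv.pow 2).const_mul ((2 / ((n : ℝ) - 2)) ^ 2)).const_sub 1).congr_deriv (by ring)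

theorem hasDerivWithinAt_pohozaevQuantity (hk : 1 ≤ k) (hu : u t ≠ 0)
    (hu' : HasDerivWithinAt u (u' t) s t) (hu'' : HasDerivWithinAt u' (u'' t) s t) :
    HasDerivWithinAt (pohozaevQuantity n k u u')
      (2 / ((n : ℝ) - 2) * (u' t / u t) * u t ^ ((2 * (n : ℝ)) / ((n : ℝ) - 2)) *
        (n - coneFactor n u u' t ^ (k - 1) *
          (2 * k * (2 / ((n : ℝ) - 2)) * ((u' t / u t) ^ 2 - u'' t / u t)
            + (n - 2 * k) * coneFactor n u u' t) *
          u t ^ (-(4 * (k : ℝ)) / ((n : ℝ) - 2)))) s t := by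
  obtain ⟨m, rfl⟩ := Nat.exists_eq_add_of_le' hk
  have hα := hu'.rpow_const (p := -(4 * ((m + 1 : ℕ) : ℝ)) / ((n : ℝ) - 2)) (Or.inl hu)
  have hβ := hu'.rpow_const (p := (2 * (n : ℝ)) / ((n : ℝ) - 2)) (Or.inl hu)
  have hw := (hasDerivWithinAt_coneFactor (n := n) hu hu' hu'').pow (m + 1)
  refine (((hα.mul hw).const_sub 1).mul hβ).congr_deriv ?_
  rw [Real.rpow_sub_one hu, Real.rpow_sub_one hu, Nat.add_sub_cancel]
  simp only [Pi.mul_apply, Pi.pow_apply]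
  push_cast
  ring

theorem hasDerivWithinAt_pohozaevQuantity_eq_zero (hn : (n : ℝ) ≠ 0) (hk : 1 ≤ k)
    (hu : u t ≠ 0) (hu' : HasDerivWithinAt u (u' t) s t) (hu'' : HasDerivWithinAt u' (u'' t) s t)
    (heq : RadialSigmaKEq n k u u' u'' t) :
    HasDerivWithinAt (pohozaevQuantity n k u u') 0 s t :=
  (hasDerivWithinAt_pohozaevQuantity hk hu hu' hu'').congr_deriv (by
    rw [heq.mul_two_n hn, sub_self, mul_zero])

end RadialSigmaK

open RadialSigmaK in
theorem pohozaev_quantity_constant_general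
    (n k : ℕ) (hn : 3 ≤ n) (hk : 1 ≤ k)
    (I : Set ℝ) (hI : I.OrdConnected)
    (u u' u'' : ℝ → ℝ)
    (hu_pos : ∀ t ∈ I, 0 < u t)
    (hu' : ∀ t ∈ I, HasDerivWithinAt u (u' t) I t)
    (hu'' : ∀ t ∈ I, HasDerivWithinAt u' (u'' t) I t)
    (heq : ∀ t ∈ I, RadialSigmaKEq n k u u' u'' t) :
    (∀ s ∈ I, ∀ t ∈ I,
        (1 - u s ^ (-(4 * (k : ℝ)) / ((n : ℝ) - 2)) *
            (1 - (2 / ((n : ℝ) - 2)) ^ 2 * (u' s / u s) ^ 2) ^ k) *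
          u s ^ ((2 * (n : ℝ)) / ((n : ℝ) - 2))
        = (1 - u t ^ (-(4 * (k : ℝ)) / ((n : ℝ) - 2)) *
            (1 - (2 / ((n : ℝ) - 2)) ^ 2 * (u' t / u t) ^ 2) ^ k) *
          u t ^ ((2 * (n : ℝ)) / ((n : ℝ) - 2))) ∧
    ∀ t ∈ I,
      HasDerivWithinAt
        (fun s =>
          (1 - u s ^ (-(4 * (k : ℝ)) / ((n : ℝ) - 2)) *
              (1 - (2 / ((n : ℝ) - 2)) ^ 2 * (u' s / u s) ^ 2) ^ k) *
            u s ^ ((2 * (n : ℝ)) / ((n : ℝ) - 2)))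
        0 I t := by
  have hn0 : (n : ℝ) ≠ 0 := Nat.cast_ne_zero.mpr (by omega)
  have hderiv : ∀ t ∈ I, HasDerivWithinAt (pohozaevQuantity n k u u') 0 I t := fun t ht =>
    hasDerivWithinAt_pohozaevQuantity_eq_zero hn0 hk (hu_pos t ht).ne' (hu' t ht) (hu'' t ht)
      (heq t ht)
  exact ⟨hI.convex.eq_of_hasDerivWithinAt_eq_zero hderiv, hderiv⟩

/-- **The Pohozaev quantity is conserved.**  If `u > 0` is twice continuously differentiable
and satisfies the radial cylindrical `σ_k` equation on an interval `I` with
`1 − (2/(n−2))²(u′/u)² > 0`, then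
`h(t) = [1 − u^{−4k/(n−2)}(1 − (2/(n−2))²(u′/u)²)^k] u^{2n/(n−2)}`
is constant on `I`; that is, `h` is differentiable on `I` with derivative `0` everywhere. -/
theorem pohozaev_quantity_constant
    (n k : ℕ) (hn : 3 ≤ n) (hk : 1 ≤ k)
    (I : Set ℝ) (hI : I.OrdConnected)
    (u u' u'' : ℝ → ℝ)
    (hu_pos : ∀ t ∈ I, 0 < u t)
    (hu' : ∀ t ∈ I, HasDerivWithinAt u (u' t) I t)
    (hu'' : ∀ t ∈ I, HasDerivWithinAt u' (u'' t) I t)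
    (hu''_cont : ContinuousOn u'' I)
    (hcone : ∀ t ∈ I, 0 < 1 - (2 / ((n : ℝ) - 2)) ^ 2 * (u' t / u t) ^ 2)
    (heq : ∀ t ∈ I, RadialSigmaKEq n k u u' u'' t) :
    (∀ s ∈ I, ∀ t ∈ I,
        (1 - u s ^ (-(4 * (k : ℝ)) / ((n : ℝ) - 2)) *
            (1 - (2 / ((n : ℝ) - 2)) ^ 2 * (u' s / u s) ^ 2) ^ k) *
          u s ^ ((2 * (n : ℝ)) / ((n : ℝ) - 2))
        = (1 - u t ^ (-(4 * (k : ℝ)) / ((n : ℝ) - 2)) *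
            (1 - (2 / ((n : ℝ) - 2)) ^ 2 * (u' t / u t) ^ 2) ^ k) *
          u t ^ ((2 * (n : ℝ)) / ((n : ℝ) - 2))) ∧
    ∀ t ∈ I,
      HasDerivWithinAt
        (fun s =>
          (1 - u s ^ (-(4 * (k : ℝ)) / ((n : ℝ) - 2)) *
              (1 - (2 / ((n : ℝ) - 2)) ^ 2 * (u' s / u s) ^ 2) ^ k) *
            u s ^ ((2 * (n : ℝ)) / ((n : ℝ) - 2)))
        0 I t :=
  pohozaev_quantity_constant_general n k hn hk I hI u u' u'' hu_pos hu' hu'' heq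
end
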